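/- In a finite extensive-form game of perfect information with real-valued payoffs, a subgame perfect Nash equilibrium exists (backward induction). -/

import Mathlib

/-- A finite extensive-form game tree of perfect information: a leaf carries a
payoff vector, an internal node is labelled by the acting player and has a
nonempty (indexed by `Fin (n+1)`) family of subtrees. -/
inductive GameTree (N : Type) : Type
  | leaf : (N → ℝ) → GameTree N
  | node : N → (n : ℕ) → (Fin (n + 1) → GameTree N) → GameTree N

/-- A strategy profile: at every (sub)tree it selects an index; at a node with
`n+1` children, the chosen child is the index taken modulo `n+1`. -/
def Strategy (N : Type) : Type := GameTree N → ℕ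

/-- The payoff vector obtained at the leaf reached by following the profile. -/
def outcome {N : Type} (σ : Strategy N) : GameTree N → (N → ℝ)
  | .leaf p => p
  | .node i n f => outcome σ (f ⟨σ (.node i n f) % (n + 1), Nat.mod_lt _ (Nat.succ_pos n)⟩)

/-- The subtree relation. -/
inductive IsSubtree {N : Type} : GameTree N → GameTree N → Prop
  | refl (t : GameTree N) : IsSubtree t t
  | child {t' : GameTree N} (i : N) (n : ℕ) (f : Fin (n + 1) → GameTree N)
      (j : Fin (n + 1)) : IsSubtree t' (f j) → IsSubtree t' (GameTree.node i n f)

/-- Subgame perfect Nash equilibrium: in every subtree, the acting player's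
selected child maximizes her continuation payoff given the profile. -/
def SPNE {N : Type} (σ : Strategy N) (t : GameTree N) : Prop :=
  ∀ t', IsSubtree t' t →
    ∀ (i : N) (n : ℕ) (f : Fin (n + 1) → GameTree N), t' = GameTree.node i n f →
      ∀ j : Fin (n + 1), outcome σ (f j) i ≤ outcome σ t' i

/-! Backward induction: at every node the acting player picks a child whose backward-induction
payoff is best for her, and the payoff of a node is that of the picked child. A strategy profile
here is a function of the subtree itself, so one profile is subgame perfect in every game. -/

noncomputable def Fin.argmax {α : Type*} [LinearOrder α] {n : ℕ} (g : Fin (n + 1) → α) :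
    Fin (n + 1) :=
  (Finite.exists_max g).choose

theorem Fin.le_apply_argmax {α : Type*} [LinearOrder α] {n : ℕ} (g : Fin (n + 1) → α)
    (j : Fin (n + 1)) : g j ≤ g (Fin.argmax g) :=
  (Finite.exists_max g).choose_spec j

namespace GameTree

variable {N : Type}

theorem outcome_node_of_eq {σ : Strategy N} {i : N} {n : ℕ} {f : Fin (n + 1) → GameTree N}
    {j : Fin (n + 1)} (h : σ (node i n f) = j) : outcome σ (node i n f) = outcome σ (f j) := by
  rw [outcome]
  congr 2
  exact Fin.ext (by simp only [h, Nat.mod_eq_of_lt j.isLt])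

noncomputable def backwardInductionPayoff : GameTree N → N → ℝ
  | leaf p => p
  | node i _ f => backwardInductionPayoff (f (Fin.argmax fun j => backwardInductionPayoff (f j) i))

noncomputable def backwardInduction : Strategy N
  | leaf _ => 0
  | node i _ f => Fin.argmax fun j => backwardInductionPayoff (f j) i

theorem outcome_backwardInduction (t : GameTree N) :
    outcome backwardInduction t = backwardInductionPayoff t := by
  induction t with
  | leaf p => rfl
  | node i n f ih =>
    rw [outcome_node_of_eq rfl, ih, backwardInductionPayoff]

theorem spne_backwardInduction (t : GameTree N) : SPNE backwardInduction t := by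
  rintro _ - i n f rfl j
  simp only [outcome_backwardInduction, backwardInductionPayoff]
  exact Fin.le_apply_argmax (fun j => backwardInductionPayoff (f j) i) j

end GameTree

/-- In a finite extensive-form game of perfect information with
real-valued payoffs, a subgame perfect Nash equilibrium exists. -/
theorem spne_exists {N : Type} (t : GameTree N) : ∃ σ : Strategy N, SPNE σ t :=
  ⟨GameTree.backwardInduction, GameTree.spne_backwardInduction t⟩
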